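/- Let d be a positive integer, c > 0 and L > 0 real numbers, and Λ a full-rank ℤ-lattice in ℝ^{2d}. For any real r ≥ 1, the series ∑' |n|^d · L · C(j+d-1, d-1) · (2c/(π|n|(d + 2j - d·sgn(n))))^r + ∑_{ξ ∈ Λ \ {0}} (2/π)^r · 1/‖ξ‖^{2r} converges if and only if r > d + 1, where the primed double sum ranges over pairs (n, j) with n a nonzero integer and j ≥ 0 an integer, excluding the pairs with j = 0 and n > 0. (This is the Schatten norm characterization for the Green operator G_α in the boundary case α = d; the case α = -d is identical with the exclusion j = 0, n < 0.) -/

import Mathlib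

/-!
On the index set `d + 2j - d·sgn n ≥ j + 1`, so the spectral term is at most a constant times
`|n|^(d-r) · C(j+d-1, d-1) (j+1)^(-r) ≤ |n|^(d-r) (j+1)^(d-1-r)`, a product of two convergent
`p`-series when `r > d + 1`. Conversely, the terms with `j = 0`, `n < 0` are a constant times
`|n|^(d-r)`, which forces `r > d + 1`. The lattice series converges as soon as `2r > 2d`, since a
discrete subgroup of `ℝ^(2d)` has rank at most `2d`.
-/

open Real Module

theorem AddSubgroup.finrank_toIntSubmodule_le_of_discrete {E : Type*} [NormedAddCommGroup E]
    [NormedSpace ℝ E] [FiniteDimensional ℝ E] (Λ : AddSubgroup E) [DiscreteTopology Λ] :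
    finrank ℤ Λ.toIntSubmodule ≤ finrank ℝ E := by
  have hspan : Submodule.span ℤ (Λ : Set E) = Λ.toIntSubmodule := Λ.toIntSubmodule.span_eq
  have hdisc : DiscreteTopology (Submodule.span ℤ (Λ : Set E)) := hspan ▸ ‹DiscreteTopology Λ›
  have hrank := Real.finrank_eq_int_finrank_of_discrete hdisc
  rw [Set.finrank, Set.finrank, hspan] at hrank
  exact hrank ▸ Submodule.finrank_le _

theorem AddSubgroup.summable_one_div_norm_rpow_of_discrete {E : Type*} [NormedAddCommGroup E]
    [NormedSpace ℝ E] [FiniteDimensional ℝ E] (Λ : AddSubgroup E) [DiscreteTopology Λ]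
    {s : ℝ} (hs : finrank ℝ E < s) :
    Summable fun ξ : Λ => 1 / ‖(ξ : E)‖ ^ s := by
  have hrank : (finrank ℤ Λ.toIntSubmodule : ℝ) < s :=
    lt_of_le_of_lt (by exact_mod_cast Λ.finrank_toIntSubmodule_le_of_discrete) hs
  have : DiscreteTopology Λ.toIntSubmodule := ‹DiscreteTopology Λ›
  refine (ZLattice.summable_norm_rpow Λ.toIntSubmodule (-s) (neg_lt_neg hrank)).congr fun ξ => ?_
  rw [rpow_neg (norm_nonneg _), one_div]
  rfl

theorem summable_nat_add_one_rpow_iff {p : ℝ} :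
    Summable (fun m : ℕ => ((m : ℝ) + 1) ^ p) ↔ p < -1 := by
  have := (summable_nat_add_iff 1 (f := fun m : ℕ => (m : ℝ) ^ p)).trans summable_nat_rpow
  exact_mod_cast this

theorem choose_add_le_succ_pow (j k : ℕ) : ((j + k).choose k : ℝ) ≤ ((j : ℝ) + 1) ^ k := by
  have := Nat.choose_le_sub_pow (j + k) k
  rw [show j + k + 1 - k = j + 1 by omega] at this
  exact_mod_cast this

theorem summable_choose_add_mul_rpow {k : ℕ} {s : ℝ} (hs : k + 1 < s) :
    Summable fun j : ℕ => ((j + k).choose k : ℝ) * ((j : ℝ) + 1) ^ (-s) := by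
  refine .of_nonneg_of_le (fun j => by positivity) (fun j => ?_)
    (summable_nat_add_one_rpow_iff.mpr (show (k : ℝ) - s < -1 by linarith))
  have hj : (0 : ℝ) < j + 1 := by positivity
  calc ((j + k).choose k : ℝ) * ((j : ℝ) + 1) ^ (-s)
      ≤ ((j : ℝ) + 1) ^ k * ((j : ℝ) + 1) ^ (-s) := by
        gcongr; exact choose_add_le_succ_pow j k
    _ = ((j : ℝ) + 1) ^ ((k : ℝ) - s) := by
        rw [← rpow_natCast, ← rpow_add hj, sub_eq_add_neg]

noncomputable section

def boundaryIndex : Set (ℤ × ℕ) := {q | q.1 ≠ 0 ∧ ¬(q.2 = 0 ∧ 0 < q.1)}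

def eigenFactor (d : ℕ) (p : ℤ × ℕ) : ℝ := d + 2 * p.2 - d * (p.1.sign : ℝ)

def greenSummand (d : ℕ) (c L r : ℝ) (p : ℤ × ℕ) : ℝ :=
  |(p.1 : ℝ)| ^ d * L * ((p.2 + d - 1).choose (d - 1) : ℝ) *
    (2 * c / (π * |(p.1 : ℝ)| * eigenFactor d p)) ^ r

end

theorem succ_le_eigenFactor {d : ℕ} (hd : 0 < d) {p : ℤ × ℕ} (hp : p ∈ boundaryIndex) :
    (p.2 : ℝ) + 1 ≤ eigenFactor d p := by
  obtain ⟨hn, hnj⟩ := hp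
  have hd1 : (1 : ℝ) ≤ d := by exact_mod_cast hd
  unfold eigenFactor
  rcases lt_or_gt_of_ne hn with hneg | hpos
  · rw [Int.sign_eq_neg_one_of_neg hneg]
    push_cast
    linarith
  · have hj : (1 : ℝ) ≤ p.2 := by
      exact_mod_cast Nat.one_le_iff_ne_zero.mpr fun h => hnj ⟨h, hpos⟩
    rw [Int.sign_eq_one_of_pos hpos]
    push_cast
    linarith

theorem greenSummand_nonneg {d : ℕ} (hd : 0 < d) {c L : ℝ} (hc : 0 ≤ c) (hL : 0 ≤ L) (r : ℝ)
    {p : ℤ × ℕ} (hp : p ∈ boundaryIndex) : 0 ≤ greenSummand d c L r p := by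
  have hE : 0 ≤ eigenFactor d p :=
    (add_nonneg p.2.cast_nonneg zero_le_one).trans (succ_le_eigenFactor hd hp)
  unfold greenSummand
  positivity

theorem greenSummand_le {d : ℕ} (hd : 0 < d) {c L r : ℝ} (hc : 0 ≤ c) (hL : 0 ≤ L) (hr : 0 ≤ r)
    {p : ℤ × ℕ} (hp : p ∈ boundaryIndex) :
    greenSummand d c L r p ≤ L * (2 * c / π) ^ r * (|(p.1 : ℝ)| ^ ((d : ℝ) - r) *
      (((p.2 + (d - 1)).choose (d - 1) : ℝ) * ((p.2 : ℝ) + 1) ^ (-r))) := by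
  have hD := succ_le_eigenFactor hd hp
  have hn : (0 : ℝ) < |(p.1 : ℝ)| := by simpa using hp.1
  have hj : (0 : ℝ) < p.2 + 1 := by positivity
  have hE : 0 < eigenFactor d p := hj.trans_le hD
  have hbase : 2 * c / (π * |(p.1 : ℝ)| * eigenFactor d p) ≤
      2 * c / π * (|(p.1 : ℝ)|⁻¹ * ((p.2 : ℝ) + 1)⁻¹) :=
    calc 2 * c / (π * |(p.1 : ℝ)| * eigenFactor d p)
        ≤ 2 * c / (π * |(p.1 : ℝ)| * ((p.2 : ℝ) + 1)) := by gcongr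
      _ = 2 * c / π * (|(p.1 : ℝ)|⁻¹ * ((p.2 : ℝ) + 1)⁻¹) := by field_simp
  calc greenSummand d c L r p
      ≤ |(p.1 : ℝ)| ^ d * L * ((p.2 + (d - 1)).choose (d - 1) : ℝ) *
          (2 * c / π * (|(p.1 : ℝ)|⁻¹ * ((p.2 : ℝ) + 1)⁻¹)) ^ r := by
        unfold greenSummand
        rw [← Nat.add_sub_assoc hd]
        gcongr
    _ = _ := by
        rw [mul_rpow (by positivity) (by positivity), mul_rpow (by positivity) (by positivity),
          inv_rpow hn.le, inv_rpow hj.le, ← rpow_neg hn.le, ← rpow_neg hj.le, sub_eq_add_neg,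
          rpow_add hn, rpow_natCast]
        ring

theorem summable_greenSummand {d : ℕ} (hd : 0 < d) {c L r : ℝ} (hc : 0 ≤ c) (hL : 0 ≤ L)
    (hr : d + 1 < r) : Summable fun p : boundaryIndex => greenSummand d c L r p := by
  have hn : Summable fun n : ℤ => |(n : ℝ)| ^ ((d : ℝ) - r) := by
    simpa using summable_abs_int_rpow (b := r - d) (by linarith)
  have hj : Summable fun j : ℕ => ((j + (d - 1)).choose (d - 1) : ℝ) * ((j : ℝ) + 1) ^ (-r) :=
    summable_choose_add_mul_rpow (by rw [Nat.cast_sub hd]; push_cast; linarith)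
  have hprod := (hn.mul_of_nonneg hj (fun n => by positivity) (fun j => by positivity)).mul_left
    (L * (2 * c / π) ^ r)
  exact (hprod.comp_injective Subtype.val_injective).of_nonneg_of_le
    (fun p => greenSummand_nonneg hd hc hL r p.2)
    (fun p => greenSummand_le hd hc hL (by linarith) p.2)

theorem greenSummand_neg_succ_zero {d : ℕ} (hd : 0 < d) {c : ℝ} (hc : 0 ≤ c) (L r : ℝ) (m : ℕ) :
    greenSummand d c L r (-(m + 1), 0) = L * (c / (π * d)) ^ r * ((m : ℝ) + 1) ^ ((d : ℝ) - r) := by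
  have hm : (0 : ℝ) < m + 1 := by positivity
  have hd0 : (d : ℝ) ≠ 0 := by positivity
  have hsign : (-(m + 1 : ℤ)).sign = -1 := Int.sign_eq_neg_one_of_neg (by omega)
  have hbase : 2 * c / (π * |((-(m + 1 : ℤ) : ℤ) : ℝ)| * eigenFactor d (-(m + 1), 0)) =
      c / (π * d) * ((m : ℝ) + 1)⁻¹ := by
    simp only [eigenFactor, hsign]
    push_cast
    rw [abs_neg, abs_of_pos hm, show (d : ℝ) + 2 * 0 - d * -1 = 2 * d by ring]
    field_simp
  rw [greenSummand, hbase, mul_rpow (by positivity) (by positivity), inv_rpow hm.le,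
    ← rpow_neg hm.le, sub_eq_add_neg, rpow_add hm, rpow_natCast]
  push_cast
  rw [abs_neg, abs_of_pos hm, zero_add, Nat.choose_self]
  ring

theorem lt_of_summable_greenSummand {d : ℕ} (hd : 0 < d) {c L r : ℝ} (hc : 0 < c) (hL : 0 < L)
    (h : Summable fun p : boundaryIndex => greenSummand d c L r p) : d + 1 < r := by
  let negSucc : ℕ → boundaryIndex := fun m => ⟨(-(m + 1), 0), by simp [boundaryIndex]; omega⟩
  have hinj : Function.Injective negSucc := fun a b hab => by
    have := congrArg (fun p : boundaryIndex => p.1.1) hab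
    simp only [negSucc] at this
    omega
  have hK : 0 < L * (c / (π * d)) ^ r := by positivity
  have hsum : Summable fun m : ℕ => ((m : ℝ) + 1) ^ ((d : ℝ) - r) := by
    refine (summable_mul_left_iff hK.ne').mp ((h.comp_injective hinj).congr fun m => ?_)
    exact greenSummand_neg_succ_zero hd hc.le L r m
  linarith [summable_nat_add_one_rpow_iff.mp hsum]

theorem schatten_green_boundary_summable_iff_general (d : ℕ) (hd : 0 < d) (c L : ℝ)
    (hc : 0 < c) (hL : 0 < L)
    (Λ : AddSubgroup (EuclideanSpace ℝ (Fin (2 * d))))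
    (hdisc : DiscreteTopology Λ)
    (r : ℝ) :
    Summable (Sum.elim
      (fun p : {q : ℤ × ℕ // q.1 ≠ 0 ∧ ¬(q.2 = 0 ∧ 0 < q.1)} =>
        |((p : ℤ × ℕ).1 : ℝ)| ^ d * L * (((p : ℤ × ℕ).2 + d - 1).choose (d - 1) : ℝ) *
          (2 * c / (π * |((p : ℤ × ℕ).1 : ℝ)| *
            ((d : ℝ) + 2 * (p : ℤ × ℕ).2 - (d : ℝ) * (((p : ℤ × ℕ).1.sign : ℤ) : ℝ)))) ^ r)
      (fun ξ : {x : Λ // x ≠ 0} =>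
        (2 / π) ^ r * (1 / ‖((ξ : Λ) : EuclideanSpace ℝ (Fin (2 * d)))‖ ^ (2 * r)))) ↔
      r > d + 1 := by
  constructor
  · intro h
    exact lt_of_summable_greenSummand hd hc hL (h.comp_injective Sum.inl_injective)
  · intro hr
    have hlattice := Λ.summable_one_div_norm_rpow_of_discrete (s := 2 * r)
      (by rw [finrank_euclideanSpace_fin]; push_cast; linarith)
    exact .sum _ (summable_greenSummand hd hc.le hL.le hr)
      ((hlattice.comp_injective Subtype.val_injective).mul_left _)

/-- Schatten norm characterization for the Green operator in the boundary case `α = d`: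
the index set excludes the pairs `(n, j)` with `j = 0` and `n > 0`, which correspond to
the zero eigenvalues of `L_d`. The series converges iff `r > d + 1`. -/
theorem schatten_green_boundary_summable_iff (d : ℕ) (hd : 0 < d) (c L : ℝ)
    (hc : 0 < c) (hL : 0 < L)
    (Λ : AddSubgroup (EuclideanSpace ℝ (Fin (2 * d))))
    (hdisc : DiscreteTopology Λ)
    (hspan : Submodule.span ℝ (Λ : Set (EuclideanSpace ℝ (Fin (2 * d)))) = ⊤)
    (r : ℝ) (hr : 1 ≤ r) :
    Summable (Sum.elim
      (fun p : {q : ℤ × ℕ // q.1 ≠ 0 ∧ ¬(q.2 = 0 ∧ 0 < q.1)} =>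
        |((p : ℤ × ℕ).1 : ℝ)| ^ d * L * (((p : ℤ × ℕ).2 + d - 1).choose (d - 1) : ℝ) *
          (2 * c / (π * |((p : ℤ × ℕ).1 : ℝ)| *
            ((d : ℝ) + 2 * (p : ℤ × ℕ).2 - (d : ℝ) * (((p : ℤ × ℕ).1.sign : ℤ) : ℝ)))) ^ r)
      (fun ξ : {x : Λ // x ≠ 0} =>
        (2 / π) ^ r * (1 / ‖((ξ : Λ) : EuclideanSpace ℝ (Fin (2 * d)))‖ ^ (2 * r)))) ↔
      r > d + 1 :=
  schatten_green_boundary_summable_iff_general d hd c L hc hL Λ hdisc r
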